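/- Let E be the incidence matrix of a (n,k,γ,δ,λ)-BIBD and let the assignment matrix be A = E^T ∈ ℝ^{k×n}. Let B be the random-diagonal encoding matrix built from A with parameter ε = 0 (so the diagonal entries of D_1,…,D_m are i.i.d. uniform on {−1,+1}). Then for every non-straggler set 𝓕 ⊆ {1,…,n} with |𝓕| = n−s, the expected approximation error satisfies E[Err_𝓕(B)] ≤ mk − mδ²(n−s)/(mδ + (n−s−1)λ). -/

import Mathlib

open MeasureTheory Matrix

noncomputable section

/-- The set `S = [1-ε, 1+ε] ∪ [-1-ε, -1+ε]`. -/
def Sset (ε : ℝ) : Set ℝ := Set.Icc (1 - ε) (1 + ε) ∪ Set.Icc (-1 - ε) (-1 + ε)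

/-- The uniform probability distribution on `Sset ε`; for `ε = 0` this is the uniform
distribution on `{-1, 1}`. -/
noncomputable def uniformS (ε : ℝ) : Measure ℝ :=
  if ε = 0 then (2 : ENNReal)⁻¹ • (Measure.dirac (1 : ℝ) + Measure.dirac (-1 : ℝ))
  else (volume (Sset ε))⁻¹ • volume.restrict (Sset ε)

/-- Joint law of the diagonal entries of the i.i.d. random diagonal matrices
`D_1, …, D_m` (the entry of `D_i` at position `j` is `d (i, j)`). -/
noncomputable def μD (m : ℕ) (ν : Type*) [Fintype ν] (ε : ℝ) :
    Measure ((Fin m × ν) → ℝ) :=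
  Measure.pi fun _ => uniformS ε

/-- Random-diagonal encoding matrix: the vertical stack of `A * D_1, …, A * D_m`,
with rows indexed by `Fin m × κ` (block `i`, row `r`). -/
def encB {m : ℕ} {κ ν : Type*} (A : Matrix κ ν ℝ) (d : (Fin m × ν) → ℝ) :
    Matrix (Fin m × κ) ν ℝ :=
  Matrix.of fun p j => A p.2 j * d (p.1, j)

/-- The target matrix `F = [f_1 | … | f_m]`, where `f_i` is `1` on the `i`-th block. -/
def Fmat (m : ℕ) (κ : Type*) : Matrix (Fin m × κ) (Fin m) ℝ :=
  Matrix.of fun p i => if p.1 = i then 1 else 0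

/-- Column submatrix corresponding to the non-straggler set `𝓕`. -/
def subCols {α ν : Type*} (M : Matrix α ν ℝ) (𝓕 : Finset ν) : Matrix α ↥𝓕 ℝ :=
  M.submatrix id (fun j => (j : ν))

/-- Squared Frobenius norm. -/
def frobSq {α β : Type*} [Fintype α] [Fintype β] (M : Matrix α β ℝ) : ℝ :=
  ∑ i, ∑ j, (M i j) ^ 2

/-- The approximation error `Err_𝓕(B) = inf_R ‖B_𝓕 R − F‖_F²`. -/
noncomputable def err {m : ℕ} {κ ν : Type*} [Fintype κ] [Fintype ν]
    (B : Matrix (Fin m × κ) ν ℝ) (𝓕 : Finset ν) : ℝ :=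
  ⨅ R : Matrix ↥𝓕 (Fin m) ℝ, frobSq (subCols B 𝓕 * R - Fmat m κ)
/-!
Decode with `R = c • D_𝓕`, i.e. `R j i = c * d (i, j)`. Since `err` is an infimum over `R`, it
is bounded by the residual of this choice. For Rademacher signs `E[d p * d q] = [p = q]` and
`E[d (a, j) * d (b, j) * d (a, j') * d (b, j')] = [a = b ∨ j = j']`, so the expected residual is
`m * ∑ r, ((c T_r - 1)² + (m - 1) c² S_r)`, where `T_r = ∑_{j ∈ 𝓕} A r j` and
`S_r = ∑_{j ∈ 𝓕} (A r j)²`. For the BIBD, with `N = |𝓕|`, `∑ T_r = ∑ S_r = N δ` and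
`∑ T_r² = N δ + N (N - 1) λ`, so the expectation is `m (k - 2 c N δ + c² N Q)` with
`Q = m δ + (N - 1) λ`, whose minimum `m k - m δ² N / Q` is attained at `c = δ / Q`.
-/

theorem Fintype.prod_multiset_map_count {P M : Type*} [Fintype P] [DecidableEq P] [CommMonoid M]
    (s : Multiset P) (f : P → M) : (s.map f).prod = ∏ p, f p ^ s.count p := by
  rw [Finset.prod_multiset_map_count]
  exact Finset.prod_subset (Finset.subset_univ _) fun p _ hp => by
    rw [Multiset.count_eq_zero.2 (by simpa using hp), pow_zero]

lemma sum_ite_eq_add_mul {ι : Type*} [DecidableEq ι] {s : Finset ι} {a : ι} (ha : a ∈ s)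
    (x y : ℝ) : ∑ b ∈ s, (if a = b then x else y) = x + (s.card - 1) * y := by
  have h (b : ι) : (if a = b then x else y) = y + if a = b then x - y else 0 := by
    split_ifs <;> ring
  simp_rw [h, Finset.sum_add_distrib, Finset.sum_ite_eq, if_pos ha, Finset.sum_const,
    nsmul_eq_mul]
  ring

section Rademacher

lemma uniformS_zero :
    uniformS 0 = (2 : ENNReal)⁻¹ • (Measure.dirac (1 : ℝ) + Measure.dirac (-1 : ℝ)) :=
  if_pos rfl

instance : IsProbabilityMeasure (uniformS 0) := by
  constructor
  rw [uniformS_zero, Measure.smul_apply, Measure.add_apply, measure_univ, measure_univ,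
    ← two_mul, mul_one, smul_eq_mul, ENNReal.inv_mul_cancel two_ne_zero ENNReal.ofNat_ne_top]

lemma integrable_uniformS_zero (f : ℝ → ℝ) : Integrable f (uniformS 0) := by
  rw [uniformS_zero]
  exact ((integrable_dirac enorm_lt_top).add_measure (integrable_dirac enorm_lt_top)).smul_measure
    (by norm_num)

lemma integral_uniformS_zero (f : ℝ → ℝ) : ∫ t, f t ∂uniformS 0 = (f 1 + f (-1)) / 2 := by
  rw [uniformS_zero, integral_smul_measure, integral_add_measure (integrable_dirac enorm_lt_top)
    (integrable_dirac enorm_lt_top), integral_dirac, integral_dirac]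
  norm_num [ENNReal.toReal_inv]
  ring

lemma integral_pow_uniformS_zero (e : ℕ) :
    ∫ t, t ^ e ∂uniformS 0 = if Even e then 1 else 0 := by
  rw [integral_uniformS_zero]
  rcases Nat.even_or_odd e with h | h
  · simp [h, h.neg_one_pow]
  · simp [Nat.not_even_iff_odd.2 h, h.neg_one_pow]

variable {m : ℕ} {ν : Type*}

def weightedCorr (𝓕 : Finset ν) (w : ν → ℝ) (a b : Fin m) (d : Fin m × ν → ℝ) : ℝ :=
  ∑ j ∈ 𝓕, w j * (d (a, j) * d (b, j))

variable (𝓕 : Finset ν) (w : ν → ℝ) (a b : Fin m)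

lemma weightedCorr_sq (d : Fin m × ν → ℝ) :
    weightedCorr 𝓕 w a b d ^ 2 = ∑ j ∈ 𝓕, ∑ j' ∈ 𝓕,
      w j * w j' * (d (a, j) * d (b, j) * (d (a, j') * d (b, j'))) := by
  rw [weightedCorr, sq, Finset.sum_mul_sum]
  exact Finset.sum_congr rfl fun j _ => Finset.sum_congr rfl fun j' _ => by ring

lemma sq_sub_weightedCorr_eq (c t : ℝ) :
    (fun d => (c * weightedCorr 𝓕 w a b d - t) ^ 2) =
      fun d => c ^ 2 * weightedCorr 𝓕 w a b d ^ 2 - 2 * c * t * weightedCorr 𝓕 w a b d + t ^ 2 :=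
  funext fun _ => by ring

variable [Fintype ν]

instance : IsProbabilityMeasure (μD m ν 0) := by
  unfold μD; infer_instance

lemma integrable_prod_pow_μD (e : Fin m × ν → ℕ) :
    Integrable (fun d => ∏ p, d p ^ e p) (μD m ν 0) :=
  Integrable.fintype_prod fun _ => integrable_uniformS_zero _

lemma integral_prod_pow_μD (e : Fin m × ν → ℕ) :
    ∫ d, ∏ p, d p ^ e p ∂μD m ν 0 = if ∀ p, Even (e p) then 1 else 0 := by
  rw [μD, integral_fintype_prod_eq_prod (fun p t => t ^ e p)]
  simp_rw [integral_pow_uniformS_zero]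
  exact Fintype.prod_boole

lemma integrable_multiset_prod_μD (s : Multiset (Fin m × ν)) :
    Integrable (fun d => (s.map d).prod) (μD m ν 0) := by
  classical
  simp_rw [Fintype.prod_multiset_map_count]
  exact integrable_prod_pow_μD _

lemma integrable_mul_μD (p q : Fin m × ν) : Integrable (fun d => d p * d q) (μD m ν 0) := by
  simpa using integrable_multiset_prod_μD (m := m) {p, q}

lemma integrable_mul_mul_mul_μD (j j' : ν) :
    Integrable (fun d => d (a, j) * d (b, j) * (d (a, j') * d (b, j'))) (μD m ν 0) := by
  simpa [mul_assoc] using integrable_multiset_prod_μD (m := m) {(a, j), (b, j), (a, j'), (b, j')}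

lemma integrable_weightedCorr : Integrable (weightedCorr 𝓕 w a b) (μD m ν 0) :=
  integrable_finsetSum _ fun j _ => (integrable_mul_μD _ _).const_mul (w j)

lemma integrable_weightedCorr_sq :
    Integrable (fun d => weightedCorr 𝓕 w a b d ^ 2) (μD m ν 0) := by
  simp_rw [weightedCorr_sq]
  exact integrable_finsetSum _ fun j _ => integrable_finsetSum _ fun j' _ =>
    (integrable_mul_mul_mul_μD _ _ _ _).const_mul _

lemma integrable_sq_sub_weightedCorr (c t : ℝ) :
    Integrable (fun d => (c * weightedCorr 𝓕 w a b d - t) ^ 2) (μD m ν 0) := by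
  rw [sq_sub_weightedCorr_eq]
  exact (((integrable_weightedCorr_sq 𝓕 w a b).const_mul _).sub
    ((integrable_weightedCorr 𝓕 w a b).const_mul _)).add (integrable_const _)

variable [DecidableEq ν]

lemma integral_multiset_prod_μD (s : Multiset (Fin m × ν)) :
    ∫ d, (s.map d).prod ∂μD m ν 0 = if ∀ p, Even (s.count p) then 1 else 0 := by
  simp_rw [Fintype.prod_multiset_map_count]
  exact integral_prod_pow_μD _

lemma integral_mul_μD (p q : Fin m × ν) :
    ∫ d, d p * d q ∂μD m ν 0 = if p = q then 1 else 0 := by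
  have h := integral_multiset_prod_μD (m := m) {p, q}
  simp only [Multiset.insert_eq_cons, Multiset.map_cons, Multiset.map_singleton,
    Multiset.prod_cons, Multiset.prod_singleton] at h
  rw [h]
  by_cases hpq : p = q
  · subst hpq
    rw [if_pos rfl, if_pos fun r => ?_]
    rw [Multiset.count_cons, Multiset.count_singleton]
    split_ifs <;> simp
  · rw [if_neg hpq, if_neg fun h => ?_]
    have := h p
    rw [Multiset.count_cons, Multiset.count_singleton, if_neg hpq, if_pos rfl] at this
    exact Nat.not_even_one this

lemma integral_mul_mul_mul_μD (j j' : ν) :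
    ∫ d, d (a, j) * d (b, j) * (d (a, j') * d (b, j')) ∂μD m ν 0 =
      if a = b ∨ j = j' then 1 else 0 := by
  have h := integral_multiset_prod_μD (m := m) {(a, j), (b, j), (a, j'), (b, j')}
  simp only [Multiset.insert_eq_cons, Multiset.map_cons, Multiset.map_singleton,
    Multiset.prod_cons, Multiset.prod_singleton, ← mul_assoc] at h
  simp_rw [← mul_assoc, h]
  simp only [Multiset.count_cons, Multiset.count_singleton]
  by_cases hab : a = b ∨ j = j'
  · rw [if_pos hab, if_pos fun r => ?_]
    clear h
    rcases hab with rfl | rfl <;> split_ifs <;> simp_all [Nat.even_iff]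
  · rw [if_neg hab, if_neg fun h => ?_]
    push Not at hab
    have := h (a, j)
    simp [hab.1, hab.2] at this

lemma integral_weightedCorr :
    ∫ d, weightedCorr 𝓕 w a b d ∂μD m ν 0 = if a = b then ∑ j ∈ 𝓕, w j else 0 := by
  unfold weightedCorr
  rw [integral_finsetSum _ fun j _ => (integrable_mul_μD _ _).const_mul (w j)]
  simp_rw [integral_const_mul, integral_mul_μD, Prod.mk.injEq, and_true, mul_ite, mul_one,
    mul_zero, Finset.sum_ite_irrel, Finset.sum_const_zero]

lemma integral_weightedCorr_sq :
    ∫ d, weightedCorr 𝓕 w a b d ^ 2 ∂μD m ν 0 =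
      if a = b then (∑ j ∈ 𝓕, w j) ^ 2 else ∑ j ∈ 𝓕, w j ^ 2 := by
  simp_rw [weightedCorr_sq]
  rw [integral_finsetSum _ fun j _ => integrable_finsetSum _ fun j' _ =>
    (integrable_mul_mul_mul_μD _ _ _ _).const_mul _]
  simp_rw [integral_finsetSum _ fun j' _ => (integrable_mul_mul_mul_μD _ _ _ _).const_mul _,
    integral_const_mul, integral_mul_mul_mul_μD]
  by_cases hab : a = b
  · simp [hab, sq, Finset.sum_mul_sum]
  · simp [hab, sq]

lemma integral_sq_sub_weightedCorr (c : ℝ) :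
    ∫ d, (c * weightedCorr 𝓕 w a b d - if a = b then 1 else 0) ^ 2 ∂μD m ν 0 =
      if a = b then (c * ∑ j ∈ 𝓕, w j - 1) ^ 2 else c ^ 2 * ∑ j ∈ 𝓕, w j ^ 2 := by
  rw [sq_sub_weightedCorr_eq, integral_add _ (integrable_const _), integral_sub,
    integral_const_mul, integral_const_mul, integral_const, integral_weightedCorr,
    integral_weightedCorr_sq]
  · by_cases hab : a = b
    · simp [hab]; ring
    · simp [hab]
  · exact (integrable_weightedCorr_sq 𝓕 w a b).const_mul _
  · exact (integrable_weightedCorr 𝓕 w a b).const_mul _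
  · exact ((integrable_weightedCorr_sq 𝓕 w a b).const_mul _).sub
      ((integrable_weightedCorr 𝓕 w a b).const_mul _)

end Rademacher

section Decoder

variable {m : ℕ} {κ ν : Type*}

def signDecoder (𝓕 : Finset ν) (c : ℝ) (d : Fin m × ν → ℝ) : Matrix 𝓕 (Fin m) ℝ :=
  Matrix.of fun j i => c * d (i, j)

lemma encB_mul_signDecoder_sub_apply (A : Matrix κ ν ℝ) (𝓕 : Finset ν) (c : ℝ)
    (d : Fin m × ν → ℝ) (a b : Fin m) (r : κ) :
    (subCols (encB A d) 𝓕 * signDecoder 𝓕 c d - Fmat m κ) (a, r) b =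
      c * weightedCorr 𝓕 (A r) a b d - if a = b then 1 else 0 := by
  simp only [Matrix.sub_apply, Matrix.mul_apply, subCols, encB, Fmat, signDecoder,
    Matrix.submatrix_apply, Matrix.of_apply, id_eq, weightedCorr, Finset.mul_sum]
  congr 1
  rw [← Finset.sum_coe_sort 𝓕]
  exact Finset.sum_congr rfl fun j _ => by ring

lemma frobSq_nonneg {α β : Type*} [Fintype α] [Fintype β] (M : Matrix α β ℝ) : 0 ≤ frobSq M :=
  Finset.sum_nonneg fun _ _ => Finset.sum_nonneg fun _ _ => sq_nonneg _

variable [Fintype κ]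

lemma frobSq_encB_mul_signDecoder_sub (A : Matrix κ ν ℝ) (𝓕 : Finset ν) (c : ℝ) :
    (fun d => frobSq (subCols (encB A d) 𝓕 * signDecoder 𝓕 c d - Fmat m κ)) = fun d =>
      ∑ a, ∑ r, ∑ b, (c * weightedCorr 𝓕 (A r) a b d - if a = b then 1 else 0) ^ 2 := by
  ext d
  simp only [frobSq, Fintype.sum_prod_type, encB_mul_signDecoder_sub_apply]

variable [Fintype ν]

lemma err_nonneg (B : Matrix (Fin m × κ) ν ℝ) (𝓕 : Finset ν) : 0 ≤ err B 𝓕 :=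
  le_ciInf fun _ => frobSq_nonneg _

lemma err_le_frobSq (B : Matrix (Fin m × κ) ν ℝ) (𝓕 : Finset ν) (R : Matrix 𝓕 (Fin m) ℝ) :
    err B 𝓕 ≤ frobSq (subCols B 𝓕 * R - Fmat m κ) :=
  ciInf_le ⟨0, Set.forall_mem_range.2 fun _ => frobSq_nonneg _⟩ R

lemma integrable_frobSq_signDecoder (A : Matrix κ ν ℝ) (𝓕 : Finset ν) (c : ℝ) :
    Integrable (fun d => frobSq (subCols (encB A d) 𝓕 * signDecoder 𝓕 c d - Fmat m κ))
      (μD m ν 0) := by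
  rw [frobSq_encB_mul_signDecoder_sub]
  exact integrable_finsetSum _ fun a _ => integrable_finsetSum _ fun r _ =>
    integrable_finsetSum _ fun b _ => integrable_sq_sub_weightedCorr _ _ _ _ _ _

lemma integral_frobSq_signDecoder [DecidableEq ν] (A : Matrix κ ν ℝ) (𝓕 : Finset ν) (c : ℝ) :
    ∫ d, frobSq (subCols (encB A d) 𝓕 * signDecoder 𝓕 c d - Fmat m κ) ∂μD m ν 0 =
      m * ∑ r, ((c * ∑ j ∈ 𝓕, A r j - 1) ^ 2 + (m - 1) * (c ^ 2 * ∑ j ∈ 𝓕, A r j ^ 2)) := by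
  rw [frobSq_encB_mul_signDecoder_sub, integral_finsetSum _ fun a _ => integrable_finsetSum _
    fun r _ => integrable_finsetSum _ fun b _ => integrable_sq_sub_weightedCorr _ _ _ _ _ _]
  simp_rw [integral_finsetSum _ fun r _ => integrable_finsetSum _
    fun b _ => integrable_sq_sub_weightedCorr _ _ _ _ _ _,
    integral_finsetSum _ fun b _ => integrable_sq_sub_weightedCorr _ _ _ _ _ _,
    integral_sq_sub_weightedCorr, sum_ite_eq_add_mul (Finset.mem_univ _), Finset.sum_const,
    Finset.card_univ, Fintype.card_fin, nsmul_eq_mul]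

end Decoder

section Design

variable {ν κ : Type*} [Fintype κ] (E : Matrix ν κ ℝ) (𝓕 : Finset ν)

lemma sum_sum_eq_card_mul_of_row_sum (δ : ℝ) (hδ : ∀ i, ∑ r, E i r = δ) :
    ∑ r, ∑ j ∈ 𝓕, E j r = (𝓕.card : ℝ) * δ := by
  rw [Finset.sum_comm, Finset.sum_congr rfl fun j _ => hδ j, Finset.sum_const, nsmul_eq_mul]

lemma sum_sum_sq_eq_card_mul_of_row_sum_sq (δ : ℝ) (hdiag : ∀ i, ∑ r, E i r ^ 2 = δ) :
    ∑ r, ∑ j ∈ 𝓕, E j r ^ 2 = (𝓕.card : ℝ) * δ := by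
  simpa using sum_sum_eq_card_mul_of_row_sum (E.map (· ^ 2)) 𝓕 δ (by simpa using hdiag)

lemma sum_sq_sum_eq_of_gram [DecidableEq ν] (δ lam : ℝ)
    (hgram : ∀ i i', ∑ r, E i r * E i' r = if i = i' then δ else lam) :
    ∑ r, (∑ j ∈ 𝓕, E j r) ^ 2 = (𝓕.card : ℝ) * δ + (𝓕.card : ℝ) * ((𝓕.card : ℝ) - 1) * lam := by
  simp_rw [sq, Finset.sum_mul_sum]
  rw [Finset.sum_comm]
  simp_rw [Finset.sum_comm (s := Finset.univ), hgram]
  rw [Finset.sum_congr rfl fun i hi => sum_ite_eq_add_mul hi δ lam, Finset.sum_const,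
    nsmul_eq_mul]
  ring

end Design

theorem stmt1_general (n k m s δ lam : ℕ) (hm : 0 < m) (hs : s ≤ n)
    (E : Matrix (Fin n) (Fin k) ℝ)
    (hbin : ∀ i j, E i j = 0 ∨ E i j = 1)
    (hδ : ∀ i, ∑ j, E i j = (δ : ℝ))
    (hlam : ∀ i i', i ≠ i' → ∑ j, E i j * E i' j = (lam : ℝ))
    (hδlam : lam < δ)
    (𝓕 : Finset (Fin n)) (hcard : 𝓕.card = n - s) :
    ∫ d, err (encB Eᵀ d) 𝓕 ∂(μD m (Fin n) 0) ≤
      (m : ℝ) * k -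
        (m : ℝ) * (δ : ℝ) ^ 2 * ((n : ℝ) - s) /
          ((m : ℝ) * δ + ((n : ℝ) - s - 1) * lam) := by
  have hdiag (i : Fin n) : ∑ r, E i r ^ 2 = δ := by
    rw [← hδ i]
    exact Finset.sum_congr rfl fun r _ => by rcases hbin i r with h | h <;> simp [h]
  have hgram (i i' : Fin n) : ∑ r, E i r * E i' r = if i = i' then (δ : ℝ) else lam := by
    split_ifs with h
    · simpa [h, sq] using hdiag i'
    · exact hlam i i' h
  have hN : (𝓕.card : ℝ) = n - s := by rw [hcard, Nat.cast_sub hs]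
  set Q : ℝ := m * δ + ((n : ℝ) - s - 1) * lam
  have hQ : 0 < Q := by
    have hδ' : (lam : ℝ) + 1 ≤ δ := by exact_mod_cast hδlam
    have hm' : (1 : ℝ) ≤ m := by exact_mod_cast hm
    have hN' : (0 : ℝ) ≤ n - s := hN ▸ Nat.cast_nonneg _
    nlinarith [(Nat.cast_nonneg lam : (0 : ℝ) ≤ lam)]
  calc ∫ d, err (encB Eᵀ d) 𝓕 ∂(μD m (Fin n) 0)
      ≤ ∫ d, frobSq (subCols (encB Eᵀ d) 𝓕 * signDecoder 𝓕 (δ / Q) d - Fmat m (Fin k))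
          ∂(μD m (Fin n) 0) :=
        integral_mono_of_nonneg (.of_forall fun _ => err_nonneg _ _)
          (integrable_frobSq_signDecoder _ _ _) (.of_forall fun _ => err_le_frobSq _ _ _)
    _ = m * ∑ r, ((δ / Q * ∑ j ∈ 𝓕, E j r - 1) ^ 2 +
          (m - 1) * ((δ / Q) ^ 2 * ∑ j ∈ 𝓕, E j r ^ 2)) :=
        integral_frobSq_signDecoder _ _ _
    _ = m * ((δ / Q) ^ 2 * ∑ r, (∑ j ∈ 𝓕, E j r) ^ 2 - 2 * (δ / Q) * ∑ r, ∑ j ∈ 𝓕, E j r + k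
          + (m - 1) * (δ / Q) ^ 2 * ∑ r, ∑ j ∈ 𝓕, E j r ^ 2) := by
        simp only [sub_sq, Finset.sum_add_distrib, Finset.sum_sub_distrib, ← Finset.mul_sum,
          ← Finset.sum_mul, mul_pow, Finset.sum_const, Finset.card_univ, Fintype.card_fin,
          nsmul_eq_mul]
        ring
    _ = _ := by
        rw [sum_sq_sum_eq_of_gram E 𝓕 δ lam hgram, sum_sum_eq_card_mul_of_row_sum E 𝓕 δ hδ,
          sum_sum_sq_eq_card_mul_of_row_sum_sq E 𝓕 δ hdiag, hN]
        field_simp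
        ring

/-- Corollary 1: expected-error upper bound for the random-diagonal
construction (`ε = 0`) with the transpose of a `(n,k,γ,δ,λ)`-BIBD incidence matrix. -/
theorem stmt1 (n k m s γ δ lam : ℕ) (hm : 0 < m) (hs : s ≤ n)
    (E : Matrix (Fin n) (Fin k) ℝ)
    (hbin : ∀ i j, E i j = 0 ∨ E i j = 1)
    (hγ : ∀ j, ∑ i, E i j = (γ : ℝ))
    (hδ : ∀ i, ∑ j, E i j = (δ : ℝ))
    (hlam : ∀ i i', i ≠ i' → ∑ j, E i j * E i' j = (lam : ℝ))
    (hδlam : lam < δ)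
    (𝓕 : Finset (Fin n)) (hcard : 𝓕.card = n - s) :
    ∫ d, err (encB Eᵀ d) 𝓕 ∂(μD m (Fin n) 0) ≤
      (m : ℝ) * k -
        (m : ℝ) * (δ : ℝ) ^ 2 * ((n : ℝ) - s) /
          ((m : ℝ) * δ + ((n : ℝ) - s - 1) * lam) :=
  stmt1_general n k m s δ lam hm hs E hbin hδ hlam hδlam 𝓕 hcard

end
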